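/- In the token-passing simulator for the IT model, in every reachable configuration exactly one of the following holds: exactly one agent has role 'leader' and no agent has role 'moving', 'starter', or 'pending'; or exactly one agent has role 'moving' and none has role 'leader', 'starter', or 'pending'; or exactly one agent has role 'starter' and none of the others; or exactly one agent has role 'pending' (possibly with a token circulating) and none of the others. -/
import Mathlib


/-- Roles of the token-passing simulator for the IT model. -/
inductive Role | leader | available | moving | starter | pending
deriving DecidableEq

/-- One interaction step of the simulator, abstracted to roles: leadership transfer
(leader → available, reactor → moving), starter selection (moving → available,
reactor → starter), start of a simulated interaction (starter → pending), token
delivery completing the interaction (pending → leader), or a step not changing roles. -/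
def RoleStep {n : ℕ} (cfg cfg' : Fin n → Role) : Prop :=
  ∃ s r : Fin n, s ≠ r ∧
    ((cfg s = Role.leader ∧
        cfg' = Function.update (Function.update cfg s Role.available) r Role.moving) ∨
     (cfg s = Role.moving ∧
        cfg' = Function.update (Function.update cfg s Role.available) r Role.starter) ∨
     (cfg s = Role.starter ∧ cfg' = Function.update cfg s Role.pending) ∨
     (cfg s ≠ Role.leader ∧ cfg s ≠ Role.moving ∧ cfg s ≠ Role.starter ∧
        cfg r = Role.pending ∧ cfg' = Function.update cfg r Role.leader) ∨
     (cfg s ≠ Role.leader ∧ cfg s ≠ Role.moving ∧ cfg s ≠ Role.starter ∧ cfg' = cfg))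

/-- Role invariant: in every configuration reachable from the initial one (exactly one
leader, all others available), exactly one agent has a non-`available` role — which is
one of leader, moving, starter, pending — and all other agents are available. -/
theorem stmt8 (n : ℕ) (hn : 2 < n) (init cfg : Fin n → Role)
    (hinit : ∃ a, init a = Role.leader ∧ ∀ b, b ≠ a → init b = Role.available)
    (hreach : Relation.ReflTransGen RoleStep init cfg) :
    ∃ a, (cfg a = Role.leader ∨ cfg a = Role.moving ∨ cfg a = Role.starter ∨
          cfg a = Role.pending) ∧ ∀ b, b ≠ a → cfg b = Role.available := by
  induction hreach with
  | refl =>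
    obtain ⟨a, ha, hb⟩ := hinit
    exact ⟨a, Or.inl ha, hb⟩
  | tail _ hstep ih =>
    obtain ⟨a, ha, hb⟩ := ih
    rename_i c c' _
    obtain ⟨s, r, hsr, hcase⟩ := hstep
    have hsa : ∀ x, c x ≠ Role.available → x = a := by
      intro x hx
      by_contra h
      exact hx (hb x h)
    rcases hcase with ⟨hs, he⟩ | ⟨hs, he⟩ | ⟨hs, he⟩ | ⟨h1, h2, h3, hp, he⟩ | ⟨h1, h2, h3, he⟩
    · have : s = a := hsa s (by simp [hs])
      refine ⟨r, ?_, ?_⟩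
      · simp [he, Function.update]
      · intro b hbr
        by_cases hbs : b = s
        · simp [he, hbr, hbs, hsr, Function.update]
        · have hba : b ≠ a := by rw [← this]; exact hbs
          simp [he, Function.update_of_ne hbr, Function.update_of_ne hbs, hb b hba]
    · have : s = a := hsa s (by simp [hs])
      refine ⟨r, ?_, ?_⟩
      · simp [he, Function.update]
      · intro b hbr
        by_cases hbs : b = s
        · simp [he, hbr, hbs, hsr, Function.update]
        · have hba : b ≠ a := by rw [← this]; exact hbs
          simp [he, Function.update_of_ne hbr, Function.update_of_ne hbs, hb b hba]
    · have hsa' : s = a := hsa s (by simp [hs])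
      refine ⟨s, ?_, ?_⟩
      · simp [he, Function.update]
      · intro b hbs
        simp [he, Function.update_of_ne hbs, hb b (hsa' ▸ hbs)]
    · have hra : r = a := hsa r (by simp [hp])
      refine ⟨r, ?_, ?_⟩
      · simp [he, Function.update]
      · intro b hbr
        simp [he, Function.update_of_ne hbr, hb b (hra ▸ hbr)]
    · exact ⟨a, he ▸ ha, fun b h => he ▸ hb b h⟩
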